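/- arXiv:1303.7293 — 4 statements merged into one kernel-verified Lean document; each statement's English description precedes it below -/
import Mathlib

section
/- Let R be a commutative noetherian ring, I, J ideals of R, M a finitely generated R-module, and N an arbitrary R-module. Then Γ_{I,J}(Hom_R(M,N)) = Hom_R(M, Γ_{I,J}(N)); that is, an R-linear map f : M → N satisfies I^n f ⊆ J f for some positive integer n if and only if f(x) ∈ Γ_{I,J}(N) for every x ∈ M. -/
open CategoryTheory

section GammaDefs

variable {R : Type} [CommRing R]

lemma gammaIJ_aux {M : Type} [AddCommGroup M] [Module R M] (I J : Ideal R) (x : M) (n : ℕ) :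
    (∀ a ∈ I ^ n, ∃ j ∈ J, a • x = j • x) ↔ I ^ n ≤ Ideal.torsionOf R M x ⊔ J := by
  constructor
  · intro h a ha
    obtain ⟨j, hj, hja⟩ := h a ha
    exact Submodule.mem_sup.2 ⟨a - j, by simp [Ideal.mem_torsionOf_iff, sub_smul, hja],
      j, hj, by ring⟩
  · intro h a ha
    obtain ⟨s, hs, j, hj, hsj⟩ := Submodule.mem_sup.1 (h ha)
    refine ⟨j, hj, ?_⟩
    rw [← hsj, add_smul, (Ideal.mem_torsionOf_iff _ _).1 hs, zero_add]

/-- The `(I,J)`-torsion submodule: elements `x` such that `I^n x ⊆ J x` for some `n > 0`. -/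
def gammaIJ (I J : Ideal R) (M : Type) [AddCommGroup M] [Module R M] : Submodule R M where
  carrier := {x | ∃ n : ℕ, 0 < n ∧ ∀ a ∈ I ^ n, ∃ j ∈ J, a • x = j • x}
  zero_mem' := ⟨1, one_pos, fun a _ => ⟨0, J.zero_mem, by simp⟩⟩
  add_mem' := by
    rintro x y ⟨n, hn, hx⟩ ⟨m, hm, hy⟩
    refine ⟨n + m, by omega, (gammaIJ_aux I J _ _).2 ?_⟩
    rw [pow_add]
    refine le_trans (Ideal.mul_mono ((gammaIJ_aux I J _ _).1 hx) ((gammaIJ_aux I J _ _).1 hy))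
      (Ideal.mul_le.2 ?_)
    rintro a ha b hb
    obtain ⟨s, hs, j, hj, rfl⟩ := Submodule.mem_sup.1 ha
    obtain ⟨t, ht, j', hj', rfl⟩ := Submodule.mem_sup.1 hb
    rw [Ideal.mem_torsionOf_iff] at hs ht
    refine Submodule.mem_sup.2 ⟨s * t, ?_, s * j' + j * t + j * j',
      J.add_mem (J.add_mem (J.mul_mem_left s hj') (J.mul_mem_right t hj)) (J.mul_mem_left j hj'),
      by ring⟩
    have h1 : (s * t) • x = 0 := by rw [mul_comm, mul_smul, hs, smul_zero]
    have h2 : (s * t) • y = 0 := by rw [mul_smul, ht, smul_zero]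
    rw [Ideal.mem_torsionOf_iff, smul_add, h1, h2, add_zero]
  smul_mem' := by
    rintro r x ⟨n, hn, hx⟩
    refine ⟨n, hn, fun a ha => ?_⟩
    obtain ⟨j, hj, hja⟩ := hx a ha
    exact ⟨j, hj, by rw [smul_comm, hja, smul_comm]⟩

/-- The `I`-torsion submodule: elements killed by a power of `I`. -/
def gammaI (I : Ideal R) (M : Type) [AddCommGroup M] [Module R M] : Submodule R M where
  carrier := {x | ∃ n : ℕ, 0 < n ∧ ∀ a ∈ I ^ n, a • x = 0}
  zero_mem' := ⟨1, one_pos, fun a _ => smul_zero a⟩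
  add_mem' := by
    rintro x y ⟨n, hn, hx⟩ ⟨m, hm, hy⟩
    refine ⟨n + m, by omega, fun a ha => ?_⟩
    rw [smul_add, hx a (Ideal.pow_le_pow_right (by omega) ha),
      hy a (Ideal.pow_le_pow_right (by omega) ha), add_zero]
  smul_mem' := by
    rintro r x ⟨n, hn, hx⟩
    exact ⟨n, hn, fun a ha => by rw [smul_comm, hx a ha, smul_zero]⟩

end GammaDefs

theorem Ideal.sup_mul_sup_le_inf_sup {R : Type*} [CommSemiring R] (A B J : Ideal R) :
    (A ⊔ J) * (B ⊔ J) ≤ A ⊓ B ⊔ J := by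
  rw [Ideal.sup_mul, Ideal.mul_sup, Ideal.mul_sup]
  refine sup_le (sup_le ?_ ?_) (sup_le ?_ ?_)
  · exact le_sup_of_le_left (le_inf Ideal.mul_le_left Ideal.mul_le_right)
  · exact le_sup_of_le_right Ideal.mul_le_right
  · exact le_sup_of_le_right Ideal.mul_le_left
  · exact le_sup_of_le_right Ideal.mul_le_left

theorem Ideal.pow_sum_le_inf_sup {R ι : Type*} [CommSemiring R] (I J : Ideal R) (s : Finset ι)
    (A : ι → Ideal R) (n : ι → ℕ) (h : ∀ i ∈ s, I ^ n i ≤ A i ⊔ J) :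
    I ^ (∑ i ∈ s, n i) ≤ s.inf A ⊔ J := by
  classical
  induction s using Finset.induction_on with
  | empty => simp
  | insert a s ha ih =>
    rw [Finset.sum_insert ha, pow_add, Finset.inf_insert]
    calc I ^ n a * I ^ (∑ i ∈ s, n i) ≤ (A a ⊔ J) * (s.inf A ⊔ J) :=
          Ideal.mul_mono (h a (s.mem_insert_self a))
            (ih fun i hi => h i (Finset.mem_insert_of_mem hi))
      _ ≤ A a ⊓ s.inf A ⊔ J := Ideal.sup_mul_sup_le_inf_sup _ _ _

theorem Finset.inf_torsionOf_apply_le_torsionOf {R M N : Type*} [CommSemiring R]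
    [AddCommMonoid M] [Module R M] [AddCommMonoid N] [Module R N] {s : Finset M}
    (hs : Submodule.span R (s : Set M) = ⊤) (f : M →ₗ[R] N) :
    s.inf (fun x => Ideal.torsionOf R N (f x)) ≤ Ideal.torsionOf R (M →ₗ[R] N) f := by
  intro r hr
  rw [Ideal.mem_torsionOf_iff]
  refine LinearMap.ext_on hs fun x hx => ?_
  exact (Ideal.mem_torsionOf_iff _ _).1
    (Finset.inf_le (f := fun x => Ideal.torsionOf R N (f x)) hx hr)

section Gamma

variable {R M N : Type} [CommRing R] [AddCommGroup M] [Module R M] [AddCommGroup N] [Module R N]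
  {I J : Ideal R}

theorem mem_gammaIJ_iff_exists_pow_le {x : M} :
    x ∈ gammaIJ I J M ↔ ∃ n, I ^ n ≤ Ideal.torsionOf R M x ⊔ J := by
  constructor
  · rintro ⟨n, -, hn⟩
    exact ⟨n, (gammaIJ_aux I J x n).1 hn⟩
  · rintro ⟨n, hn⟩
    exact ⟨n + 1, n.succ_pos,
      (gammaIJ_aux I J x _).2 ((Ideal.pow_le_pow_right n.le_succ).trans hn)⟩

theorem LinearMap.map_mem_gammaIJ (g : M →ₗ[R] N) {x : M} (hx : x ∈ gammaIJ I J M) :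
    g x ∈ gammaIJ I J N := by
  obtain ⟨n, hn, hx⟩ := hx
  refine ⟨n, hn, fun a ha => ?_⟩
  obtain ⟨j, hj, hja⟩ := hx a ha
  exact ⟨j, hj, by rw [← map_smul, hja, map_smul]⟩

end Gamma

theorem gammaIJ_hom_eq_general (R : Type) [CommRing R] (I J : Ideal R)
    (M N : Type) [AddCommGroup M] [Module R M] [Module.Finite R M]
    [AddCommGroup N] [Module R N] (f : M →ₗ[R] N) :
    f ∈ gammaIJ I J (M →ₗ[R] N) ↔ ∀ x : M, f x ∈ gammaIJ I J N := by
  refine ⟨fun hf x => (LinearMap.applyₗ x).map_mem_gammaIJ hf, fun h => ?_⟩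
  obtain ⟨s, hs⟩ := Module.Finite.fg_top (R := R) (M := M)
  choose n hn using fun x => mem_gammaIJ_iff_exists_pow_le.1 (h x)
  exact mem_gammaIJ_iff_exists_pow_le.2 ⟨∑ x ∈ s, n x,
    (Ideal.pow_sum_le_inf_sup I J s _ n fun x _ => hn x).trans
      (sup_le_sup_right (s.inf_torsionOf_apply_le_torsionOf hs f) J)⟩

/-- Theorem 2.2: for finitely generated `M`,
`Γ_{I,J}(Hom_R(M,N)) = Hom_R(M, Γ_{I,J}(N))`. -/
theorem gammaIJ_hom_eq (R : Type) [CommRing R] [IsNoetherianRing R] (I J : Ideal R)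
    (M N : Type) [AddCommGroup M] [Module R M] [Module.Finite R M]
    [AddCommGroup N] [Module R N] (f : M →ₗ[R] N) :
    f ∈ gammaIJ I J (M →ₗ[R] N) ↔ ∀ x : M, f x ∈ gammaIJ I J N :=
  gammaIJ_hom_eq_general R I J M N f
end

section
/- Let R be a commutative noetherian ring, I, J ideals of R, M a finitely generated R-module, and N an arbitrary R-module. Then Ass_R(Γ_{I,J}(M,N)) = Supp_R(M) ∩ Ass_R(N) ∩ W(I,J). -/
/-!
`Γ_{I,J}(X)` is a submodule of `X`, so its associated primes are the primes `p = ann x` with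
`x ∈ X` and `I^n ⊆ p + J`; this reduces the claim to `Ass Hom(M, N) = Supp M ∩ Ass N`.
If `p = ann φ`, then `p ⊇ ann M`, and some value `φ m` already has annihilator `p`: otherwise
choose, for each generator `m`, an element outside `p` killing `φ m`; their product kills `φ`
but avoids `p`. Conversely, for `p ∈ Supp M` the fibre `κ(p) ⊗ M` is nonzero, hence so is some
`M → κ(p)`; clearing denominators on generators gives a nonzero `φ : M → R/p`, and composing with
`R/p ↪ N` gives a map whose annihilator is exactly `p`, since `R/p` is a domain.
-/
section

variable {R : Type*} [CommRing R] {X Y : Type*} [AddCommGroup X] [Module R X]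
  [AddCommGroup Y] [Module R Y]

theorem Ideal.torsionOf_apply_of_injective {f : X →ₗ[R] Y} (hf : Function.Injective f) (x : X) :
    Ideal.torsionOf R Y (f x) = Ideal.torsionOf R X x := by
  ext a
  simp only [Ideal.mem_torsionOf_iff, ← map_smul, map_eq_zero_iff f hf]

theorem mem_associatedPrimes_iff_exists_torsionOf_eq [IsNoetherianRing R] {p : Ideal R} :
    p ∈ associatedPrimes R X ↔ p.IsPrime ∧ ∃ x : X, Ideal.torsionOf R X x = p := by
  simp only [AssociatedPrimes.mem_iff, isAssociatedPrime_iff, Submodule.bot_colon',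
    Ideal.annihilator_span_singleton_eq_torsionOf, eq_comm]

end

section

variable {R : Type} [CommRing R] {X : Type} [AddCommGroup X] [Module R X]

theorem mem_gammaIJ_iff {I J : Ideal R} {x : X} :
    x ∈ gammaIJ I J X ↔ ∃ n : ℕ, 0 < n ∧ I ^ n ≤ Ideal.torsionOf R X x ⊔ J :=
  exists_congr fun n => and_congr_right fun _ => gammaIJ_aux I J x n

theorem associatedPrimes_gammaIJ [IsNoetherianRing R] (I J : Ideal R) :
    associatedPrimes R (gammaIJ I J X) =
      associatedPrimes R X ∩ {p : Ideal R | p.IsPrime ∧ ∃ n : ℕ, 0 < n ∧ I ^ n ≤ p ⊔ J} := by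
  have hval (x : gammaIJ I J X) :=
    Ideal.torsionOf_apply_of_injective (gammaIJ I J X).injective_subtype x
  ext p
  simp only [Set.mem_inter_iff, Set.mem_ofPred_eq, mem_associatedPrimes_iff_exists_torsionOf_eq]
  constructor
  · rintro ⟨hp, x, rfl⟩
    rw [← hval] at hp ⊢
    exact ⟨⟨hp, x, rfl⟩, hp, mem_gammaIJ_iff.1 x.2⟩
  · rintro ⟨⟨hp, x, rfl⟩, -, hx⟩
    exact ⟨hp, ⟨x, mem_gammaIJ_iff.2 hx⟩, (hval _).symm⟩

end

section

open scoped TensorProduct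

variable {R : Type*} [CommRing R] {M N : Type*} [AddCommGroup M] [Module R M]
  [AddCommGroup N] [Module R N]

theorem Module.exists_linearMap_residueField_ne_zero [Module.Finite R M] {p : PrimeSpectrum R}
    (hp : p ∈ Module.support R M) : ∃ f : M →ₗ[R] p.asIdeal.ResidueField, f ≠ 0 := by
  rw [Module.mem_support_iff_nontrivial_residueField_tensorProduct] at hp
  obtain ⟨v, hv⟩ := exists_ne (0 : p.asIdeal.ResidueField ⊗[R] M)
  obtain ⟨g, hg⟩ := Module.Projective.exists_dual_ne_zero p.asIdeal.ResidueField hv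
  refine ⟨(LinearMap.liftBaseChangeEquiv p.asIdeal.ResidueField).symm g, fun h => hg ?_⟩
  rw [LinearEquiv.symm_apply_eq, map_zero] at h
  rw [h, LinearMap.zero_apply]

theorem LinearMap.exists_ne_zero_of_isFractionRing (D K : Type*) [CommRing D] [CommRing K]
    [Algebra R D] [Algebra D K] [Algebra R K] [IsScalarTower R D K] [IsFractionRing D K]
    [Module.Finite R M] {f : M →ₗ[R] K} (hf : f ≠ 0) : ∃ g : M →ₗ[R] D, g ≠ 0 := by
  classical
  obtain ⟨s, hs⟩ := Module.Finite.fg_top (R := R) (M := M)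
  obtain ⟨b, hb⟩ :=
    IsLocalization.exist_integer_multiples_of_finset (nonZeroDivisors D) (s.image f)
  let ι : D →ₗ[R] K := (IsScalarTower.toAlgHom R D K).toLinearMap
  have hι : Function.Injective ι := IsFractionRing.injective D K
  have hrange : LinearMap.range (algebraMap D K b • f) ≤ LinearMap.range ι := by
    rw [LinearMap.range_eq_map, ← hs, Submodule.map_span_le]
    intro m hm
    obtain ⟨d, hd⟩ := hb (f m) (Finset.mem_image_of_mem f hm)
    exact ⟨d, by simpa [ι, Algebra.smul_def] using hd⟩
  refine ⟨(LinearEquiv.ofInjective ι hι).symm ∘ₗ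
    (algebraMap D K b • f).codRestrict _ fun m => hrange (LinearMap.mem_range_self _ m),
    fun hg => hf ?_⟩
  ext m
  have hm : algebraMap D K b * f m = 0 := by
    simpa [Algebra.smul_def] using congr(ι ($hg m))
  exact (IsLocalization.map_units K b).mul_right_eq_zero.1 hm

theorem LinearMap.annihilator_le_torsionOf (φ : M →ₗ[R] N) :
    Module.annihilator R M ≤ Ideal.torsionOf R (M →ₗ[R] N) φ := fun a ha => by
  rw [Ideal.mem_torsionOf_iff]
  ext m
  rw [LinearMap.smul_apply, ← map_smul, Module.mem_annihilator.1 ha m, map_zero,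
    LinearMap.zero_apply]

theorem LinearMap.exists_torsionOf_apply_eq [Module.Finite R M] (φ : M →ₗ[R] N)
    [(Ideal.torsionOf R (M →ₗ[R] N) φ).IsPrime] :
    ∃ m, Ideal.torsionOf R N (φ m) = Ideal.torsionOf R (M →ₗ[R] N) φ := by
  classical
  by_contra! hne
  have hle (m : M) : Ideal.torsionOf R (M →ₗ[R] N) φ ≤ Ideal.torsionOf R N (φ m) :=
    fun a ha => by
      rw [Ideal.mem_torsionOf_iff] at ha ⊢
      rw [← LinearMap.smul_apply, ha, LinearMap.zero_apply]
  choose c hc hcφ using fun m => SetLike.exists_of_lt ((hle m).lt_of_ne (hne m).symm)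
  obtain ⟨s, hs⟩ := Module.Finite.fg_top (R := R) (M := M)
  have hprod : ∏ m ∈ s, c m ∈ Ideal.torsionOf R (M →ₗ[R] N) φ := by
    refine (Ideal.mem_torsionOf_iff _ _).2 <| LinearMap.ext_on hs fun m hm => ?_
    rw [LinearMap.smul_apply, LinearMap.zero_apply, ← Finset.prod_erase_mul s c hm, mul_smul,
      (Ideal.mem_torsionOf_iff _ _).1 (hc m), smul_zero]
  obtain ⟨m, -, hm⟩ := Ideal.IsPrime.prod_mem_iff.1 hprod
  exact hcφ m hm

theorem torsionOf_linearMap_quotient_of_ne_zero {p : Ideal R} [p.IsPrime] {φ : M →ₗ[R] R ⧸ p}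
    (hφ : φ ≠ 0) : Ideal.torsionOf R (M →ₗ[R] R ⧸ p) φ = p := by
  obtain ⟨m, hm⟩ := DFunLike.ne_iff.1 hφ
  ext a
  rw [Ideal.mem_torsionOf_iff, ← Ideal.Quotient.eq_zero_iff_mem]
  constructor
  · intro ha
    have : Ideal.Quotient.mk p a * φ m = 0 := by
      rw [← Ideal.Quotient.algebraMap_eq, ← Algebra.smul_def, ← LinearMap.smul_apply, ha,
        LinearMap.zero_apply]
    exact (mul_eq_zero.1 this).resolve_right hm
  · intro ha
    ext m
    rw [LinearMap.smul_apply, Algebra.smul_def, Ideal.Quotient.algebraMap_eq, ha, zero_mul,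
      LinearMap.zero_apply]

theorem associatedPrimes_linearMap [IsNoetherianRing R] [Module.Finite R M] :
    associatedPrimes R (M →ₗ[R] N) =
      {p : Ideal R | ∃ hp : p.IsPrime, (⟨p, hp⟩ : PrimeSpectrum R) ∈ Module.support R M} ∩
        associatedPrimes R N := by
  ext p
  rw [Set.mem_inter_iff, mem_associatedPrimes_iff_exists_torsionOf_eq,
    mem_associatedPrimes_iff_exists_torsionOf_eq]
  constructor
  · rintro ⟨hp, φ, rfl⟩
    obtain ⟨m, hm⟩ := φ.exists_torsionOf_apply_eq
    exact ⟨⟨hp, Module.mem_support_iff_of_finite.2 φ.annihilator_le_torsionOf⟩, hp, φ m, hm⟩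
  · rintro ⟨⟨hp, hsupp⟩, hpN⟩
    obtain ⟨-, ι, hι⟩ := (isAssociatedPrime_iff_exists_injective_linearMap p N).1
      (mem_associatedPrimes_iff_exists_torsionOf_eq.2 hpN)
    obtain ⟨f, hf⟩ := Module.exists_linearMap_residueField_ne_zero hsupp
    obtain ⟨φ, hφ⟩ := LinearMap.exists_ne_zero_of_isFractionRing (R ⧸ p) p.ResidueField hf
    refine ⟨hp, ι ∘ₗ φ, ?_⟩
    have hιcomp : Function.Injective (LinearMap.compRight R (M := M) ι) :=
      fun φ ψ h => LinearMap.ext fun m => hι congr($h m)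
    rw [← LinearMap.compRight_apply R, Ideal.torsionOf_apply_of_injective hιcomp,
      torsionOf_linearMap_quotient_of_ne_zero hφ]

end

/-- Corollary 2.3: `Ass(Γ_{I,J}(M,N)) = Supp M ∩ Ass N ∩ W(I,J)`. -/
theorem ass_gammaIJ_hom (R : Type) [CommRing R] [IsNoetherianRing R] (I J : Ideal R)
    (M N : Type) [AddCommGroup M] [Module R M] [Module.Finite R M]
    [AddCommGroup N] [Module R N] :
    associatedPrimes R ↥(gammaIJ I J (M →ₗ[R] N)) =
      {p : Ideal R | ∃ hp : p.IsPrime, (⟨p, hp⟩ : PrimeSpectrum R) ∈ Module.support R M} ∩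
        associatedPrimes R N ∩
        {p : Ideal R | p.IsPrime ∧ ∃ n : ℕ, 0 < n ∧ I ^ n ≤ p ⊔ J} := by
  rw [associatedPrimes_gammaIJ, associatedPrimes_linearMap]
end

section
/- Let R be a commutative noetherian ring, I, I', J, J' ideals of R, M a finitely generated R-module, and N an R-module. Then Γ_{I,J}(Γ_{I',J'}(M,N)) = Γ_{I',J'}(Γ_{I,J}(M,N)), where Γ_{I,J} applied to the submodule Γ_{I',J'}(M,N) of Hom_R(M,N) means its (I,J)-torsion submodule. -/
open CategoryTheory

lemma mem_gammaIJ_submodule {R : Type} [CommRing R] {P : Type} [AddCommGroup P] [Module R P]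
    (S : Submodule R P) (I J : Ideal R) (x : S) :
    x ∈ gammaIJ I J S ↔ (x : P) ∈ gammaIJ I J P := by
  constructor <;> rintro ⟨n, hn, h⟩ <;> refine ⟨n, hn, fun a ha => ?_⟩ <;>
    obtain ⟨j, hj, e⟩ := h a ha
  · exact ⟨j, hj, congrArg Subtype.val e⟩
  · exact ⟨j, hj, Subtype.ext e⟩

lemma gammaIJ_submodule_map {R : Type} [CommRing R] {P : Type} [AddCommGroup P] [Module R P]
    (S : Submodule R P) (I J : Ideal R) :
    (gammaIJ I J S).map S.subtype = S ⊓ gammaIJ I J P := by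
  ext y
  simp only [Submodule.mem_map, Submodule.mem_inf]
  constructor
  · rintro ⟨x, hx, rfl⟩
    exact ⟨x.2, (mem_gammaIJ_submodule S I J x).1 hx⟩
  · rintro ⟨hyS, hy⟩
    exact ⟨⟨y, hyS⟩, (mem_gammaIJ_submodule S I J ⟨y, hyS⟩).2 hy, rfl⟩

/-- Proposition 2.4 (i): `Γ_{I,J}(Γ_{I',J'}(M,N)) = Γ_{I',J'}(Γ_{I,J}(M,N))`
(as submodules of `Hom_R(M,N)`). -/
theorem gammaIJ_gammaIJ_comm (R : Type) [CommRing R] [IsNoetherianRing R]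
    (I I' J J' : Ideal R) (M N : Type) [AddCommGroup M] [Module R M] [Module.Finite R M]
    [AddCommGroup N] [Module R N] :
    (gammaIJ I J ↥(gammaIJ I' J' (M →ₗ[R] N))).map (gammaIJ I' J' (M →ₗ[R] N)).subtype =
      (gammaIJ I' J' ↥(gammaIJ I J (M →ₗ[R] N))).map (gammaIJ I J (M →ₗ[R] N)).subtype := by
  rw [gammaIJ_submodule_map, gammaIJ_submodule_map, inf_comm]
end

section
/- Let R be a commutative noetherian ring and I, J ideals of R. If N is a J-torsion R-module (i.e. Γ_J(N) = N, where Γ_J(N) = {x ∈ N | J^k x = 0 for some positive integer k}), then Γ_{I,J}(N) = Γ_I(N), where Γ_I(N) = {x ∈ N | I^n x = 0 for some positive integer n}. -/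
open CategoryTheory

lemma sup_pow_le (R : Type) [CommRing R] (A B : Ideal R) (k : ℕ) :
    (A ⊔ B) ^ k ≤ A ⊔ B ^ k := by
  induction k with
  | zero => simp
  | succ k ih =>
    rw [pow_succ]
    calc (A ⊔ B) ^ k * (A ⊔ B) ≤ (A ⊔ B ^ k) * (A ⊔ B) := Ideal.mul_mono_left ih
    _ ≤ A ⊔ B ^ (k + 1) := by
        rw [Submodule.sup_mul, Submodule.mul_sup, Submodule.mul_sup, pow_succ]
        refine sup_le (sup_le ?_ ?_) (sup_le ?_ le_sup_right)
        · exact le_trans (Ideal.mul_le.2 fun a ha b hb => A.mul_mem_right b ha) le_sup_left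
        · exact le_trans (Ideal.mul_le.2 fun a ha b hb => A.mul_mem_right b ha) le_sup_left
        · exact le_trans (Ideal.mul_le.2 fun a ha b hb => A.mul_mem_left a hb) le_sup_left

/-- If `N` is `J`-torsion, then `Γ_{I,J}(N) = Γ_I(N)`. -/
theorem gammaIJ_eq_gammaI_of_J_torsion (R : Type) [CommRing R] [IsNoetherianRing R]
    (I J : Ideal R) (N : Type) [AddCommGroup N] [Module R N]
    (hN : gammaI J N = ⊤) :
    gammaIJ I J N = gammaI I N := by
  ext x
  constructor
  · rintro ⟨n, hn, h⟩
    have hle := (gammaIJ_aux I J x n).1 h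
    have hxJ : x ∈ gammaI J N := hN ▸ Submodule.mem_top
    obtain ⟨k, hk, hJ⟩ := hxJ
    refine ⟨n * k, Nat.mul_pos hn hk, fun a ha => ?_⟩
    have h1 : I ^ (n * k) ≤ Ideal.torsionOf R N x := by
      rw [pow_mul]
      refine le_trans (Ideal.pow_right_mono hle k) (le_trans (sup_pow_le R _ _ k) (sup_le le_rfl ?_))
      intro b hb
      exact (Ideal.mem_torsionOf_iff _ _).2 (hJ b hb)
    exact (Ideal.mem_torsionOf_iff _ _).1 (h1 ha)
  · rintro ⟨n, hn, h⟩
    exact ⟨n, hn, fun a ha => ⟨0, J.zero_mem, by rw [h a ha, zero_smul]⟩⟩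
end
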